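/- One-step squared consensus-error recursion: Under the setting of the one-step contraction (W symmetric doubly stochastic, η := ‖W − (1/m)𝟏𝟏ᵀ‖ with 0 < η < 1, x⁺ := (W ⊗ I_d)(x − λ u), averages x̄, x̄⁺), one has ‖x⁺ − x̄⁺ ⊗ 𝟏‖² ≤ ‖x − x̄ ⊗ 𝟏‖² − (1 − η)‖x − x̄ ⊗ 𝟏‖² + λ² (η²/(1 − η)) ‖u‖². -/

import Mathlib

/-!
With `J = (1/m) 𝟏𝟏ᵀ`, column stochasticity of `W` gives `x⁺ - x̄⁺ ⊗ 𝟏 = ((W - J) ⊗ I)(x - λu)`, and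
row stochasticity lets `x` be replaced by its consensus error `e = x - x̄ ⊗ 𝟏`, since `W - J` kills
constant vectors. As `(W - J) ⊗ I` acts on each of the `d` coordinate columns separately, its
norm is at most `‖W - J‖ = η`, so `‖x⁺ - x̄⁺ ⊗ 𝟏‖ ≤ η ‖e‖ + η |λ| ‖u‖`, and Young's inequality
`(η a + η c)² ≤ η a² + η²/(1-η) c²` finishes the proof.
-/

open scoped Matrix

/-- The Euclidean norm of the stacked vector `(y 1, …, y m) ∈ ℝ^{md}`. -/
noncomputable def stackedNorm {m d : ℕ} (y : Fin m → EuclideanSpace ℝ (Fin d)) : ℝ :=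
  Real.sqrt (∑ i, ‖y i‖ ^ 2)

open Finset

section BlockAction

variable {ι E : Type*} [Fintype ι] [AddCommGroup E] [Module ℝ E]

/-- The action of `A ⊗ I` on a stacked vector `(y i)ᵢ`. -/
def blockMulVec (A : Matrix ι ι ℝ) (y : ι → E) : ι → E := fun i => ∑ j, A i j • y j

theorem blockMulVec_sub (A : Matrix ι ι ℝ) (y z : ι → E) :
    blockMulVec A (y - z) = blockMulVec A y - blockMulVec A z := by
  funext i
  simp only [blockMulVec, Pi.sub_apply, smul_sub, sum_sub_distrib]

theorem blockMulVec_smul (A : Matrix ι ι ℝ) (c : ℝ) (y : ι → E) :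
    blockMulVec A (c • y) = c • blockMulVec A y := by
  funext i
  simp only [blockMulVec, Pi.smul_apply, smul_sum, smul_comm c]

theorem blockMulVec_const_eq_zero {A : Matrix ι ι ℝ} (hA : A *ᵥ (fun _ => 1) = 0) (v : E) :
    blockMulVec A (fun _ => v) = 0 := by
  funext i
  have hrow : ∑ j, A i j = 0 := by simpa [Matrix.mulVec, dotProduct] using congrFun hA i
  simp only [blockMulVec, ← sum_smul, hrow, zero_smul, Pi.zero_apply]

end BlockAction

noncomputable def averagingMatrix (m : ℕ) : Matrix (Fin m) (Fin m) ℝ :=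
  (m : ℝ)⁻¹ • Matrix.of fun _ _ => 1

section Consensus

variable {m : ℕ} {E : Type*} [AddCommGroup E] [Module ℝ E]

noncomputable def consensusError (x : Fin m → E) : Fin m → E :=
  fun i => x i - (m : ℝ)⁻¹ • ∑ i', x i'

theorem consensusError_blockMulVec {W : Matrix (Fin m) (Fin m) ℝ}
    (hW : (fun _ => (1 : ℝ)) ᵥ* W = fun _ => 1) (y : Fin m → E) :
    consensusError (blockMulVec W y) = blockMulVec (W - averagingMatrix m) y := by
  have hcol : ∀ j, ∑ i, W i j = 1 := fun j => by
    simpa [Matrix.vecMul, dotProduct] using congrFun hW j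
  funext i
  simp only [consensusError, blockMulVec, averagingMatrix, Matrix.sub_apply, Matrix.smul_apply,
    Matrix.of_apply, smul_eq_mul, mul_one, sub_smul, sum_sub_distrib, ← smul_sum]
  rw [sum_comm]
  simp only [← sum_smul, hcol, one_smul]

theorem mulVec_one_sub_averagingMatrix {W : Matrix (Fin m) (Fin m) ℝ}
    (hW : W *ᵥ (fun _ => (1 : ℝ)) = fun _ => 1) :
    (W - averagingMatrix m) *ᵥ (fun _ => 1) = 0 := by
  funext i
  have : (m : ℝ) ≠ 0 := Nat.cast_ne_zero.mpr (Fin.pos i).ne'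
  rw [Matrix.sub_mulVec, hW]
  simp [averagingMatrix, Matrix.mulVec, dotProduct, this]

theorem blockMulVec_consensusError {A : Matrix (Fin m) (Fin m) ℝ}
    (hA : A *ᵥ (fun _ => 1) = 0) (x : Fin m → E) :
    blockMulVec A (consensusError x) = blockMulVec A x := by
  have : consensusError x = x - fun _ => (m : ℝ)⁻¹ • ∑ i', x i' := rfl
  rw [this, blockMulVec_sub, blockMulVec_const_eq_zero hA, sub_zero]

end Consensus

section StackedNorm

variable {m d : ℕ}

theorem stackedNorm_eq_norm_toLp (y : Fin m → EuclideanSpace ℝ (Fin d)) :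
    stackedNorm y = ‖WithLp.toLp 2 y‖ := by
  rw [stackedNorm, PiLp.norm_eq_of_L2]

theorem stackedNorm_nonneg (y : Fin m → EuclideanSpace ℝ (Fin d)) : 0 ≤ stackedNorm y :=
  Real.sqrt_nonneg _

theorem stackedNorm_sub_le (y z : Fin m → EuclideanSpace ℝ (Fin d)) :
    stackedNorm (y - z) ≤ stackedNorm y + stackedNorm z := by
  simpa only [stackedNorm_eq_norm_toLp, WithLp.toLp_sub] using norm_sub_le _ _

theorem stackedNorm_smul (c : ℝ) (y : Fin m → EuclideanSpace ℝ (Fin d)) :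
    stackedNorm (c • y) = |c| * stackedNorm y := by
  rw [stackedNorm_eq_norm_toLp, stackedNorm_eq_norm_toLp, WithLp.toLp_smul, norm_smul,
    Real.norm_eq_abs]

def stackedColumn (y : Fin m → EuclideanSpace ℝ (Fin d)) (k : Fin d) : EuclideanSpace ℝ (Fin m) :=
  WithLp.toLp 2 fun i => y i k

theorem stackedNorm_sq_eq_sum_stackedColumn (y : Fin m → EuclideanSpace ℝ (Fin d)) :
    stackedNorm y ^ 2 = ∑ k, ‖stackedColumn y k‖ ^ 2 := by
  rw [stackedNorm, Real.sq_sqrt (by positivity)]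
  simp [EuclideanSpace.real_norm_sq_eq, stackedColumn, sum_comm (γ := Fin d)]

theorem stackedColumn_blockMulVec (A : Matrix (Fin m) (Fin m) ℝ)
    (y : Fin m → EuclideanSpace ℝ (Fin d)) (k : Fin d) :
    stackedColumn (blockMulVec A y) k
      = Matrix.toEuclideanCLM (𝕜 := ℝ) A (stackedColumn y k) := by
  ext i
  simp [stackedColumn, blockMulVec, Matrix.mulVec, dotProduct]

theorem stackedNorm_blockMulVec_le (A : Matrix (Fin m) (Fin m) ℝ)
    (y : Fin m → EuclideanSpace ℝ (Fin d)) :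
    stackedNorm (blockMulVec A y)
      ≤ ‖Matrix.toEuclideanCLM (𝕜 := ℝ) (n := Fin m) A‖ * stackedNorm y := by
  refine le_of_sq_le_sq ?_ (by positivity [stackedNorm_nonneg y])
  rw [mul_pow, stackedNorm_sq_eq_sum_stackedColumn, stackedNorm_sq_eq_sum_stackedColumn,
    mul_sum]
  gcongr with k
  rw [stackedColumn_blockMulVec, ← mul_pow]
  exact pow_le_pow_left₀ (norm_nonneg _) ((Matrix.toEuclideanCLM (𝕜 := ℝ) A).le_opNorm _) 2

end StackedNorm

theorem sq_mul_add_mul_le {η : ℝ} (hη0 : 0 ≤ η) (hη1 : η < 1) (a c : ℝ) :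
    (η * a + η * c) ^ 2 ≤ η * a ^ 2 + η ^ 2 / (1 - η) * c ^ 2 := by
  have h1 : 0 < 1 - η := by linarith
  rw [← sub_nonneg]
  have key : η * a ^ 2 + η ^ 2 / (1 - η) * c ^ 2 - (η * a + η * c) ^ 2
      = η * ((1 - η) * a - η * c) ^ 2 / (1 - η) := by
    field_simp
    ring
  rw [key]
  positivity

theorem one_step_squared_consensus_recursion_general
    {m d : ℕ}
    (W : Matrix (Fin m) (Fin m) ℝ)
    (hWrow : W *ᵥ (fun _ => (1 : ℝ)) = fun _ => 1)
    (hWcol : (fun _ => (1 : ℝ)) ᵥ* W = fun _ => 1)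
    (η : ℝ)
    (hη : η = ‖Matrix.toEuclideanCLM (𝕜 := ℝ) (n := Fin m)
        (W - (m : ℝ)⁻¹ • Matrix.of (fun _ _ => (1 : ℝ)))‖)
    (hη1 : η < 1)
    (x u : Fin m → EuclideanSpace ℝ (Fin d)) (lam : ℝ)
    (xplus : Fin m → EuclideanSpace ℝ (Fin d))
    (hxplus : ∀ i, xplus i = ∑ j, W i j • (x j - lam • u j)) :
    stackedNorm (fun i => xplus i - (m : ℝ)⁻¹ • ∑ i', xplus i') ^ 2
      ≤ stackedNorm (fun i => x i - (m : ℝ)⁻¹ • ∑ i', x i') ^ 2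
        - (1 - η) * stackedNorm (fun i => x i - (m : ℝ)⁻¹ • ∑ i', x i') ^ 2
        + lam ^ 2 * (η ^ 2 / (1 - η)) * stackedNorm u ^ 2 := by
  change stackedNorm (consensusError xplus) ^ 2
    ≤ stackedNorm (consensusError x) ^ 2 - (1 - η) * stackedNorm (consensusError x) ^ 2
      + lam ^ 2 * (η ^ 2 / (1 - η)) * stackedNorm u ^ 2
  set A := W - averagingMatrix m
  have hA : η = ‖Matrix.toEuclideanCLM (𝕜 := ℝ) A‖ := hη
  have herror : consensusError xplus
      = blockMulVec A (consensusError x) - lam • blockMulVec A u := by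
    rw [show xplus = blockMulVec W (x - lam • u) from funext hxplus,
      consensusError_blockMulVec hWcol, blockMulVec_sub, blockMulVec_smul,
      blockMulVec_consensusError (mulVec_one_sub_averagingMatrix hWrow)]
  have hbound : stackedNorm (consensusError xplus)
      ≤ η * stackedNorm (consensusError x) + η * (|lam| * stackedNorm u) := by
    rw [herror, hA]
    calc _ ≤ _ := stackedNorm_sub_le _ _
      _ ≤ _ := by
        rw [stackedNorm_smul, mul_left_comm]
        gcongr <;> exact stackedNorm_blockMulVec_le A _
  calc stackedNorm (consensusError xplus) ^ 2
      ≤ (η * stackedNorm (consensusError x) + η * (|lam| * stackedNorm u)) ^ 2 :=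
        pow_le_pow_left₀ (stackedNorm_nonneg _) hbound 2
    _ ≤ η * stackedNorm (consensusError x) ^ 2
        + η ^ 2 / (1 - η) * (|lam| * stackedNorm u) ^ 2 :=
        sq_mul_add_mul_le (hA ▸ norm_nonneg _) hη1 _ _
    _ = _ := by rw [mul_pow, sq_abs]; ring

/-- **One-step squared consensus-error recursion**: for `W` symmetric doubly stochastic
with spectral norm `η = ‖W - (1/m)𝟙𝟙ᵀ‖ ∈ (0,1)`, one step `x⁺ = (W ⊗ I_d)(x - λu)`
satisfies `‖x⁺ - x̄⁺ ⊗ 𝟙‖² ≤ ‖x - x̄ ⊗ 𝟙‖² - (1-η)‖x - x̄ ⊗ 𝟙‖² + λ²(η²/(1-η))‖u‖²`. -/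
theorem one_step_squared_consensus_recursion
    {m d : ℕ} (hm : 0 < m)
    (W : Matrix (Fin m) (Fin m) ℝ)
    (hWsymm : W.IsSymm)
    (hWnonneg : ∀ i j, 0 ≤ W i j)
    (hWrow : W *ᵥ (fun _ => (1 : ℝ)) = fun _ => 1)
    (hWcol : (fun _ => (1 : ℝ)) ᵥ* W = fun _ => 1)
    (η : ℝ)
    (hη : η = ‖Matrix.toEuclideanCLM (𝕜 := ℝ) (n := Fin m)
        (W - (m : ℝ)⁻¹ • Matrix.of (fun _ _ => (1 : ℝ)))‖)
    (hη0 : 0 < η) (hη1 : η < 1)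
    (x u : Fin m → EuclideanSpace ℝ (Fin d)) (lam : ℝ) (hlam : 0 ≤ lam)
    (xplus : Fin m → EuclideanSpace ℝ (Fin d))
    (hxplus : ∀ i, xplus i = ∑ j, W i j • (x j - lam • u j)) :
    stackedNorm (fun i => xplus i - (m : ℝ)⁻¹ • ∑ i', xplus i') ^ 2
      ≤ stackedNorm (fun i => x i - (m : ℝ)⁻¹ • ∑ i', x i') ^ 2
        - (1 - η) * stackedNorm (fun i => x i - (m : ℝ)⁻¹ • ∑ i', x i') ^ 2
        + lam ^ 2 * (η ^ 2 / (1 - η)) * stackedNorm u ^ 2 :=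
  one_step_squared_consensus_recursion_general W hWrow hWcol η hη hη1 x u lam xplus hxplus
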